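/- arXiv:1512.04647 — 3 statements merged into one kernel-verified Lean document; each statement's English description precedes it below -/
import Mathlib

section
/- The map sending a hypernatural number β to the galaxy of log(β) is a surjection from the positive hypernaturals onto the set of galaxies of positive hyperreals. -/
open Filter

/-- The hypernatural numbers: germs of sequences of natural numbers. -/
def Hypernat (U : Ultrafilter ℕ) : Set (Germ (U : Filter ℕ) ℝ) :=
  {x | ∃ f : ℕ → ℕ, x = (↑(fun k => (f k : ℝ)) : Germ (U : Filter ℕ) ℝ)}

/-- The hyperreal extension of the natural logarithm, applied coordinatewise. -/
noncomputable def hlog (U : Ultrafilter ℕ) : Germ (U : Filter ℕ) ℝ → Germ (U : Filter ℕ) ℝ :=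
  Germ.map Real.log

/-- Two hyperreals lie in the same galaxy: their difference is a limited hyperreal. -/
def InGalaxy (U : Ultrafilter ℕ) (β α : Germ (U : Filter ℕ) ℝ) : Prop :=
  ∃ n : ℕ, |β - α| ≤ (n : Germ (U : Filter ℕ) ℝ)

lemma log_ceil_exp_close (x : ℝ) (hx : 0 < x) :
    |Real.log (⌈Real.exp x⌉₊ : ℝ) - x| ≤ 1 := by
  have hex : (0:ℝ) < Real.exp x := Real.exp_pos x
  have h1 : Real.exp x ≤ (⌈Real.exp x⌉₊ : ℝ) := Nat.le_ceil _
  have h2 : (⌈Real.exp x⌉₊ : ℝ) ≤ Real.exp x + 1 := le_of_lt (Nat.ceil_lt_add_one hex.le)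
  have hge1 : (1:ℝ) ≤ Real.exp x := by
    rw [← Real.exp_zero]; exact Real.exp_le_exp.mpr hx.le
  have hlow : x ≤ Real.log (⌈Real.exp x⌉₊ : ℝ) := by
    calc x = Real.log (Real.exp x) := (Real.log_exp x).symm
    _ ≤ _ := Real.log_le_log hex h1
  have hup : Real.log (⌈Real.exp x⌉₊ : ℝ) ≤ x + 1 := by
    have h3 : (⌈Real.exp x⌉₊ : ℝ) ≤ 2 * Real.exp x := by linarith
    calc Real.log (⌈Real.exp x⌉₊ : ℝ) ≤ Real.log (2 * Real.exp x) :=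
          Real.log_le_log (lt_of_lt_of_le hex h1) h3
    _ = Real.log 2 + x := by rw [Real.log_mul (by norm_num) hex.ne', Real.log_exp]
    _ ≤ x + 1 := by
        have : Real.log 2 ≤ 1 := by
          calc Real.log 2 ≤ Real.log (Real.exp 1) :=
                Real.log_le_log (by norm_num) (by linarith [Real.exp_one_gt_d9])
          _ = 1 := Real.log_exp 1
        linarith
  rw [abs_le]; constructor <;> linarith

/-- The map sending a hypernatural `β` to the galaxy of `log β` is a surjection from the
positive hypernaturals onto the set of galaxies of positive hyperreals. -/
theorem log_hypernat_galaxy_surjective (U : Ultrafilter ℕ)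
    (hU : Filter.cofinite ≤ (U : Filter ℕ)) :
    ∀ α : Germ (U : Filter ℕ) ℝ, 0 < α →
      ∃ β ∈ Hypernat U, 0 < β ∧ InGalaxy U (hlog U β) α := by
  refine fun α => Germ.inductionOn α fun g hg => ?_
  set f : ℕ → ℕ := fun k => ⌈Real.exp (g k)⌉₊ with hf
  refine ⟨↑(fun k => (f k : ℝ)), ⟨f, rfl⟩, ?_, 1, ?_⟩
  · refine Germ.coe_pos.mpr (Eventually.of_forall fun k => ?_)
    have : 0 < f k := Nat.ceil_pos.mpr (Real.exp_pos _)
    exact_mod_cast this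
  · have hpos : ∀ᶠ k in (U : Filter ℕ), 0 < g k := Germ.coe_pos.mp hg
    show |hlog U ↑(fun k => (f k : ℝ)) - ↑g| ≤ ((1:ℕ) : Germ (U : Filter ℕ) ℝ)
    have : hlog U ↑(fun k => (f k : ℝ)) = ↑(fun k => Real.log (f k : ℝ)) := rfl
    rw [this, ← Germ.coe_sub, Germ.abs_def, Germ.map_coe]
    have h1 : ((1:ℕ) : Germ (U : Filter ℕ) ℝ) = (↑(fun _ : ℕ => (1:ℝ))) := by rw [Nat.cast_one]; rfl
    rw [h1, Germ.coe_le]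
    filter_upwards [hpos] with k hk
    exact log_ceil_exp_close (g k) hk
end

section
/- With R, (ν_k), α, I_α, M_α as above, the collection 𝒥_α of ideals P with I_α ⊆ P and P ∩ M_α = ∅ has a unique maximal element P_α, and P_α is a prime ideal. -/
open Filter

/-- `β ≫ α` : `c·α < β` for every positive standard real `c`. -/
def MuchGreater (U : Ultrafilter ℕ) (β α : Germ (U : Filter ℕ) ℝ) : Prop :=
  ∀ c : ℝ, 0 < c → ((c : ℝ) : Germ (U : Filter ℕ) ℝ) * α < β

/-- `ν` is a sequence of (rank-one) valuations on the commutative ring `R`: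
`ν k (a+b) ≥ min (ν k a) (ν k b)`, `ν k (ab) = ν k a + ν k b`, `ν k a = ∞ ↔ a = 0`,
and `ν k 1 = 0`. -/
def IsValSeq {R : Type*} [CommRing R] (ν : ℕ → R → ENNReal) : Prop :=
  ∀ k : ℕ, (∀ a b : R, min (ν k a) (ν k b) ≤ ν k (a + b)) ∧
    (∀ a b : R, ν k (a * b) = ν k a + ν k b) ∧
    (∀ a : R, ν k a = ⊤ ↔ a = 0) ∧ ν k 1 = 0

/-- `[ν_k(a)]` : the hyperreal class of the sequence `(ν k a)` (via `ENNReal.toReal`). -/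
noncomputable def vGerm (U : Ultrafilter ℕ) {R : Type*} [CommRing R]
    (ν : ℕ → R → ENNReal) (a : R) : Germ (U : Filter ℕ) ℝ :=
  ↑(fun k => (ν k a).toReal)

/-- `I_α = {a : [ν_k(a)] ≫ α}` (with `0 ∈ I_α` by convention). -/
noncomputable def Igg (U : Ultrafilter ℕ) {R : Type*} [CommRing R]
    (ν : ℕ → R → ENNReal) (α : Germ (U : Filter ℕ) ℝ) : Set R :=
  {a | a = 0 ∨ MuchGreater U (vGerm U ν a) α}

/-- `M_α = {a ≠ 0 : [ν_k(a)] ≤ n·α for some standard natural n}`. -/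
noncomputable def Mle (U : Ultrafilter ℕ) {R : Type*} [CommRing R]
    (ν : ℕ → R → ENNReal) (α : Germ (U : Filter ℕ) ℝ) : Set R :=
  {a | a ≠ 0 ∧ ∃ n : ℕ, vGerm U ν a ≤ (n : Germ (U : Filter ℕ) ℝ) * α}

/-- `P` is a maximal element of the family `𝒥_α` of ideals containing `I_α` and
disjoint from `M_α`. -/
def IsMaxJ (U : Ultrafilter ℕ) {R : Type*} [CommRing R]
    (ν : ℕ → R → ENNReal) (α : Germ (U : Filter ℕ) ℝ) (P : Ideal R) : Prop :=
  Igg U ν α ⊆ (P : Set R) ∧ Disjoint (P : Set R) (Mle U ν α) ∧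
    ∀ Q : Ideal R, Igg U ν α ⊆ (Q : Set R) → Disjoint (Q : Set R) (Mle U ν α) →
      P ≤ Q → Q = P

section Aux

variable {U : Ultrafilter ℕ} {R : Type*} [CommRing R] {ν : ℕ → R → ENNReal}

lemma vseq_ne_top (hν : IsValSeq ν) {a : R} (ha : a ≠ 0) (k : ℕ) : ν k a ≠ ⊤ :=
  fun h => ha (((hν k).2.2.1 a).1 h)

lemma one_ne_zero_of_valseq (hν : IsValSeq ν) : (1 : R) ≠ 0 := by
  intro h
  have h3 := ((hν 0).2.2.1 1).2 h
  rw [(hν 0).2.2.2] at h3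
  simp at h3

/-- `Igg` is the complement of `Mle`. -/
lemma Igg_eq_compl_Mle (hν : IsValSeq ν) {α : Germ (U : Filter ℕ) ℝ} (hαpos : 0 < α) :
    Igg U ν α = (Mle U ν α)ᶜ := by
  ext a
  simp only [Igg, Mle, Set.mem_setOf_eq, Set.mem_compl_iff, not_and, not_exists]
  constructor
  · rintro (rfl | hMG)
    · intro h; exact absurd rfl h
    · intro _ n hle
      have h1 : ((n : ℝ) : Germ (U : Filter ℕ) ℝ) * α <
          (((n : ℝ) + 1 : ℝ) : Germ (U : Filter ℕ) ℝ) * α := by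
        refine mul_lt_mul_of_pos_right (Germ.const_lt ?_) hαpos
        linarith
      have h2 := hMG ((n : ℝ) + 1) (by positivity)
      have hn : ((n : ℕ) : Germ (U : Filter ℕ) ℝ) = (((n : ℝ)) : Germ (U : Filter ℕ) ℝ) := rfl
      rw [hn] at hle
      exact absurd hle (not_le.2 (h1.trans h2))
  · intro h
    by_cases ha : a = 0
    · exact Or.inl ha
    · refine Or.inr fun c hc => ?_
      have h1 : ¬ vGerm U ν a ≤ ((⌈c⌉₊ : ℕ) : Germ (U : Filter ℕ) ℝ) * α := h ha _
      have h2 : ((c : ℝ) : Germ (U : Filter ℕ) ℝ) * α ≤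
          ((⌈c⌉₊ : ℕ) : Germ (U : Filter ℕ) ℝ) * α := by
        have hn : ((⌈c⌉₊ : ℕ) : Germ (U : Filter ℕ) ℝ) =
            (((⌈c⌉₊ : ℝ)) : Germ (U : Filter ℕ) ℝ) := rfl
        rw [hn]
        exact mul_le_mul_of_nonneg_right (Germ.const_le (Nat.le_ceil c)) hαpos.le
      exact h2.trans_lt (not_le.1 h1)

lemma Igg_add_mem (hν : IsValSeq ν) {α : Germ (U : Filter ℕ) ℝ}
    (hα : α ∈ Hypernat U) {a b : R}
    (ha : a ∈ Igg U ν α) (hb : b ∈ Igg U ν α) : a + b ∈ Igg U ν α := by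
  by_cases ha0 : a = 0
  · subst ha0; simpa using hb
  by_cases hb0 : b = 0
  · subst hb0; simpa using ha
  have ha : MuchGreater U (vGerm U ν a) α := ha.resolve_left ha0
  have hb : MuchGreater U (vGerm U ν b) α := hb.resolve_left hb0
  obtain ⟨fα, rfl⟩ := hα
  by_cases hab : a + b = 0
  · exact Or.inl hab
  refine Or.inr fun c hc => ?_
  have h1 := Germ.coe_lt.1 (ha c hc)
  have h2 := Germ.coe_lt.1 (hb c hc)
  refine Germ.coe_lt.2 ((h1.and h2).mono fun k ⟨p, q⟩ => ?_)
  have hmin : min ((ν k a).toReal) ((ν k b).toReal) ≤ (ν k (a + b)).toReal := by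
    rw [← ENNReal.toReal_min (vseq_ne_top hν ha0 k) (vseq_ne_top hν hb0 k)]
    · exact ENNReal.toReal_mono (vseq_ne_top hν hab k) ((hν k).1 a b)
  exact lt_of_lt_of_le (lt_min p q) hmin

lemma Igg_mul_mem (hν : IsValSeq ν) {α : Germ (U : Filter ℕ) ℝ} {r a : R}
    (ha : a ∈ Igg U ν α) : r * a ∈ Igg U ν α := by
  by_cases hra : r * a = 0
  · exact Or.inl hra
  have hr : r ≠ 0 := fun h => hra (by simp [h])
  have ha0 : a ≠ 0 := fun h => hra (by simp [h])
  rcases ha with rfl | ha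
  · exact absurd rfl ha0
  refine Or.inr fun c hc => ?_
  refine lt_of_lt_of_le (ha c hc) (Germ.coe_le.2 (Eventually.of_forall fun k => ?_))
  show (ν k a).toReal ≤ (ν k (r * a)).toReal
  rw [(hν k).2.1 r a, ENNReal.toReal_add (vseq_ne_top hν hr k) (vseq_ne_top hν ha0 k)]
  exact le_add_of_nonneg_left ENNReal.toReal_nonneg

/-- The ideal with carrier `Igg`. -/
noncomputable def IggIdeal (U : Ultrafilter ℕ) {R : Type*} [CommRing R]
    (ν : ℕ → R → ENNReal) (hν : IsValSeq ν) (α : Germ (U : Filter ℕ) ℝ)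
    (hα : α ∈ Hypernat U) : Ideal R where
  carrier := Igg U ν α
  zero_mem' := Or.inl rfl
  add_mem' := Igg_add_mem hν hα
  smul_mem' r a ha := by simpa [smul_eq_mul] using Igg_mul_mem hν ha

lemma IggIdeal_prime (hν : IsValSeq ν) {α : Germ (U : Filter ℕ) ℝ}
    (hα : α ∈ Hypernat U) (hαpos : 0 < α) : (IggIdeal U ν hν α hα).IsPrime := by
  constructor
  · intro h
    have h1 : (1 : R) ∈ IggIdeal U ν hν α hα := by rw [h]; trivial
    rcases (h1 : (1 : R) ∈ Igg U ν α) with h1 | h1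
    · exact one_ne_zero_of_valseq hν h1
    · have hv1 : vGerm U ν (1 : R) = 0 := by
        have : (fun k => (ν k (1 : R)).toReal) = fun _ => (0 : ℝ) := by
          funext k; rw [(hν k).2.2.2]; simp
        show (↑(fun k => (ν k (1:R)).toReal) : Germ (U : Filter ℕ) ℝ) = 0
        rw [this]; rfl
      have := h1 1 one_pos
      rw [hv1, show ((1 : ℝ) : Germ (U : Filter ℕ) ℝ) = 1 from rfl, one_mul] at this
      have hlt : α < 0 := this
      exact absurd hαpos (not_lt.2 hlt.le)
  · intro a b hab
    by_cases ha0 : a = 0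
    · exact Or.inl (Or.inl ha0)
    by_cases hb0 : b = 0
    · exact Or.inr (Or.inl hb0)
    have hab0 : a * b ≠ 0 := by
      intro h
      have := ((hν 0).2.2.1 (a * b)).2 h
      rw [(hν 0).2.1 a b] at this
      exact ENNReal.add_ne_top.2 ⟨vseq_ne_top hν ha0 0, vseq_ne_top hν hb0 0⟩ this
    have hMG : MuchGreater U (vGerm U ν (a * b)) α := by
      rcases (hab : a * b ∈ Igg U ν α) with h | h
      · exact absurd h hab0
      · exact h
    by_contra hcon
    push_neg at hcon
    obtain ⟨hna, hnb⟩ := hcon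
    have hna' : ¬ MuchGreater U (vGerm U ν a) α := fun h => hna (Or.inr h)
    have hnb' : ¬ MuchGreater U (vGerm U ν b) α := fun h => hnb (Or.inr h)
    simp only [MuchGreater, not_forall, not_lt] at hna' hnb'
    obtain ⟨c, hc, hca⟩ := hna'
    obtain ⟨c', hc', hcb⟩ := hnb'
    have hvab : vGerm U ν (a * b) = vGerm U ν a + vGerm U ν b := by
      show (↑(fun k => (ν k (a*b)).toReal) : Germ (U : Filter ℕ) ℝ) = _
      have : (fun k => (ν k (a*b)).toReal)
          = (fun k => (ν k a).toReal) + (fun k => (ν k b).toReal) := by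
        funext k
        show _ = (ν k a).toReal + (ν k b).toReal
        rw [(hν k).2.1 a b,
          ENNReal.toReal_add (vseq_ne_top hν ha0 k) (vseq_ne_top hν hb0 k)]
      rw [this, Germ.coe_add]
      rfl
    have hsum : vGerm U ν (a * b) ≤ (((c + c' : ℝ)) : Germ (U : Filter ℕ) ℝ) * α := by
      rw [hvab]
      have : (((c + c' : ℝ)) : Germ (U : Filter ℕ) ℝ)
          = ((c : ℝ) : Germ (U : Filter ℕ) ℝ) + ((c' : ℝ) : Germ (U : Filter ℕ) ℝ) := rfl
      rw [this, add_mul]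
      exact add_le_add hca hcb
    exact absurd hsum (not_le.2 (hMG (c + c') (by positivity)))

end Aux

/-- The family `𝒥_α` of ideals containing `I_α` and disjoint from `M_α` has a unique
maximal element, and every maximal element is a prime ideal. -/
theorem exists_unique_maximal_Jalpha_and_prime (U : Ultrafilter ℕ)
    (hU : Filter.cofinite ≤ (U : Filter ℕ))
    {R : Type*} [CommRing R] (ν : ℕ → R → ENNReal) (hν : IsValSeq ν)
    (α : Germ (U : Filter ℕ) ℝ) (hα : α ∈ Hypernat U) (hαpos : 0 < α) :
    (∃! P : Ideal R, IsMaxJ U ν α P) ∧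
    ∀ P : Ideal R, IsMaxJ U ν α P → P.IsPrime := by
  set J := IggIdeal U ν hν α hα with hJ
  have hJcar : (J : Set R) = Igg U ν α := rfl
  have hcompl := Igg_eq_compl_Mle hν hαpos (U := U) (R := R) (ν := ν)
  have hJmax : IsMaxJ U ν α J := by
    refine ⟨subset_rfl, ?_, ?_⟩
    · rw [hJcar, hcompl]
      exact disjoint_compl_left
    · intro Q hQ1 hQ2 _
      have hQsub : (Q : Set R) ⊆ Igg U ν α := by
        rw [hcompl]
        exact Set.disjoint_right.1 hQ2.symm
      exact le_antisymm (fun x hx => hQsub hx) (fun x hx => hQ1 hx)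
  have huniq : ∀ P : Ideal R, IsMaxJ U ν α P → P = J := by
    intro P hP
    have hPsub : (P : Set R) ⊆ Igg U ν α := by
      rw [hcompl]
      exact Set.disjoint_right.1 hP.2.1.symm
    have hle : P ≤ J := fun x hx => (hPsub hx : x ∈ Igg U ν α)
    have hge : J ≤ P := fun x hx => hP.1 hx
    exact le_antisymm hle hge
  refine ⟨⟨J, hJmax, huniq⟩, fun P hP => ?_⟩
  rw [huniq P hP]
  exact IggIdeal_prime hν hα hαpos
end

section
/- The ring of entire functions on ℂ contains a strictly decreasing chain of prime ideals indexed by a set of cardinality continuum; in particular, its Krull dimension is at least the cardinality of the continuum. -/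
/-!
Let `v_m(f)` be the order of vanishing of an entire function `f` at `2 ^ m` and fix a
nonprincipal ultrafilter `U` on `ℕ`. For `1 < b < 2` let `P_b` consist of the `f` such that, for
every `k`, `k ⌊b ^ m⌋ ≤ v_m(f)` for `U`-almost all `m`. Each `v_m` turns products into sums and
`U` is an ultrafilter, so `P_b` is prime, and `P_b` shrinks as `b` grows. For `a < b < 2`, the
canonical product with a zero of order `⌊b ^ m⌋` at each `2 ^ m` converges because
`∑ b ^ m / 2 ^ m < ∞`; it lies in `P_a` but not in `P_b`. Hence `b ↦ P_b` is strictly decreasing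
on `(1, 2)`.
-/

open Filter

/-- The ring of entire functions, as a subring of all functions `ℂ → ℂ` with
pointwise operations. -/
def entireRing : Subring (ℂ → ℂ) where
  carrier := {f | Differentiable ℂ f}
  mul_mem' hf hg := hf.mul hg
  one_mem' := differentiable_const 1
  add_mem' hf hg := hf.add hg
  zero_mem' := differentiable_const 0
  neg_mem' hf := hf.neg

section CanonicalProduct

variable {ι : Type*} {a : ι → ℂ}

noncomputable def canonicalProduct (a : ι → ℂ) (z : ℂ) : ℂ := ∏' i, (1 - z / a i)

theorem hasProdLocallyUniformlyOn_canonicalProduct (ha : Summable fun i ↦ ‖a i‖⁻¹) :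
    HasProdLocallyUniformlyOn (fun i z ↦ 1 - z / a i) (canonicalProduct a) Set.univ := by
  simp_rw [sub_eq_add_neg]
  refine hasProdLocallyUniformlyOn_of_forall_compact isOpen_univ fun K _ hK ↦ ?_
  obtain ⟨R, hR⟩ := hK.isBounded.subset_closedBall 0
  refine (ha.mul_left R).hasProdUniformlyOn_one_add hK (.of_forall fun i z hz ↦ ?_)
    fun i ↦ by fun_prop
  have hz : ‖z‖ ≤ R := by simpa using hR hz
  rw [norm_neg, norm_div, div_eq_mul_inv]
  gcongr

theorem differentiable_canonicalProduct (ha : Summable fun i ↦ ‖a i‖⁻¹) :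
    Differentiable ℂ (canonicalProduct a) := by
  rw [← differentiableOn_univ]
  exact (hasProdLocallyUniformlyOn_canonicalProduct ha).differentiableOn
    (.of_forall fun s ↦ by simpa [Finset.prod_fn] using
      DifferentiableOn.finsetProd (fun _ _ ↦ by fun_prop)) isOpen_univ

theorem canonicalProduct_ne_zero (ha : Summable fun i ↦ ‖a i‖⁻¹) {z : ℂ} (hz : ∀ i, a i ≠ z) :
    canonicalProduct a z ≠ 0 := by
  simp_rw [canonicalProduct, sub_eq_add_neg]
  refine tprod_one_add_ne_zero_of_summable (fun i ↦ ?_) ?_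
  · rw [← sub_eq_add_neg, sub_ne_zero, ne_comm]
    rcases eq_or_ne (a i) 0 with h | h
    · simp [h] -- `z / 0 = 0`, so a vanishing `a i` contributes the factor `1`
    · exact (div_eq_one_iff_eq h).not.2 (hz i).symm
  · simpa [div_eq_mul_inv, mul_comm] using ha.mul_left ‖z‖

theorem multipliable_canonicalProduct (ha : Summable fun i ↦ ‖a i‖⁻¹) (z : ℂ) :
    Multipliable fun i ↦ 1 - z / a i :=
  ((hasProdLocallyUniformlyOn_canonicalProduct ha).hasProd (Set.mem_univ z)).multipliable

theorem analyticOrderAt_canonicalProduct (ha : Summable fun i ↦ ‖a i‖⁻¹) {p : ℂ} (hp : p ≠ 0)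
    {s : Finset ι} (hs : ∀ i, a i = p ↔ i ∈ s) :
    analyticOrderAt (canonicalProduct a) p = s.card := by
  let Q := canonicalProduct fun i : ↥(↑s : Set ι)ᶜ ↦ a i
  have hQ : Differentiable ℂ Q := differentiable_canonicalProduct (ha.subtype _)
  have hQp : Q p ≠ 0 := canonicalProduct_ne_zero (ha.subtype _) fun i ↦ mt (hs i).1 i.2
  have hfactor (z : ℂ) : canonicalProduct a z = (z - p) ^ s.card • ((-p⁻¹) ^ s.card * Q z) := by
    have hsplit := Multipliable.tprod_mul_tprod_compl (f := fun i ↦ 1 - z / a i)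
      (s.multipliable _) (multipliable_canonicalProduct (ha.subtype _) z)
    rw [Finset.tprod_subtype' s (fun i ↦ 1 - z / a i),
      Finset.prod_congr rfl fun i hi ↦ by rw [(hs i).2 hi], Finset.prod_const] at hsplit
    rw [canonicalProduct, ← hsplit, smul_eq_mul, ← mul_assoc, ← mul_pow]
    congr 2
    field_simp
    ring
  exact ((differentiable_canonicalProduct ha).analyticAt p).analyticOrderAt_eq_natCast.2
    ⟨_, analyticAt_const.mul (hQ.analyticAt p), mul_ne_zero (by simp [hp]) hQp, .of_forall hfactor⟩

end CanonicalProduct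

theorem exists_differentiable_analyticOrderAt_eq {κ : Type*} {p : κ → ℂ}
    (hp : Function.Injective p) (hp0 : ∀ m, p m ≠ 0) {e : κ → ℕ}
    (he : Summable fun m ↦ e m * ‖p m‖⁻¹) :
    ∃ f : ℂ → ℂ, Differentiable ℂ f ∧ ∀ m, analyticOrderAt f (p m) = e m := by
  let a : (Σ m, Fin (e m)) → ℂ := fun i ↦ p i.1
  have ha : Summable fun i ↦ ‖a i‖⁻¹ :=
    (summable_sigma_of_nonneg fun _ ↦ by positivity).2 ⟨fun _ ↦ .of_finite, by simpa [a] using he⟩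
  refine ⟨canonicalProduct a, differentiable_canonicalProduct ha, fun m ↦ ?_⟩
  rw [analyticOrderAt_canonicalProduct ha (hp0 m)
    (s := ({m} : Finset κ).sigma fun _ ↦ Finset.univ)]
  · simp
  · rintro ⟨n, j⟩
    simp [a, hp.eq_iff]

namespace AddValuation

variable {R ι : Type*} [CommRing R]

def growthIdeal (v : ι → AddValuation R ℕ∞) (U : Ultrafilter ι) (e : ι → ℕ) : Ideal R where
  carrier := {f | ∀ k : ℕ, ∀ᶠ i in U, (k * e i : ℕ∞) ≤ v i f}
  zero_mem' _ := .of_forall fun i ↦ by simp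
  add_mem' hf hg k := by
    filter_upwards [hf k, hg k] with i hfi hgi
    exact (le_min hfi hgi).trans ((v i).map_add _ _)
  smul_mem' c f hf k := by
    filter_upwards [hf k] with i hfi
    rw [smul_eq_mul, (v i).map_mul]
    exact le_add_left hfi

variable {v : ι → AddValuation R ℕ∞} {U : Ultrafilter ι} {e e' : ι → ℕ} {f : R}

theorem mem_growthIdeal : f ∈ growthIdeal v U e ↔ ∀ k : ℕ, ∀ᶠ i in U, (k * e i : ℕ∞) ≤ v i f :=
  Iff.rfl

theorem notMem_growthIdeal : f ∉ growthIdeal v U e ↔ ∃ k : ℕ, ∀ᶠ i in U, v i f < k * e i := by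
  simp [mem_growthIdeal]

theorem growthIdeal_isPrime (he : ∀ᶠ i in U, e i ≠ 0) : (growthIdeal v U e).IsPrime := by
  refine Ideal.isPrime_iff.2 ⟨fun htop ↦ ?_, fun {f g} hfg ↦ ?_⟩
  · obtain ⟨i, hi, hei⟩ := ((mem_growthIdeal.1 ((Ideal.eq_top_iff_one _).1 htop) 1).and he).exists
    simp_all
  · by_contra! h
    obtain ⟨k, hk⟩ := notMem_growthIdeal.1 h.1
    obtain ⟨l, hl⟩ := notMem_growthIdeal.1 h.2
    obtain ⟨i, hkl, hki, hli⟩ := ((hfg (k + l)).and (hk.and hl)).exists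
    rw [(v i).map_mul] at hkl
    push_cast at hkl
    exact (hkl.trans_lt (ENat.add_lt_add hki hli)).ne (add_mul _ _ _)

theorem growthIdeal_anti (h : ∀ᶠ i in U, e i ≤ e' i) : growthIdeal v U e' ≤ growthIdeal v U e :=
  fun f hf k ↦ by
    filter_upwards [hf k, h] with i hfi hi
    exact le_trans (by gcongr) hfi

end AddValuation

theorem floor_pow_ne_zero {b : ℝ} (hb : 1 ≤ b) (m : ℕ) : ⌊b ^ m⌋₊ ≠ 0 :=
  (Nat.floor_pos.2 (one_le_pow₀ hb)).ne'

theorem floor_pow_le_floor_pow {b c : ℝ} (hb : 0 ≤ b) (hbc : b ≤ c) (m : ℕ) :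
    ⌊b ^ m⌋₊ ≤ ⌊c ^ m⌋₊ :=
  Nat.floor_le_floor (pow_le_pow_left₀ hb hbc m)

theorem eventually_mul_floor_pow_le {b c : ℝ} (hb : 0 < b) (hbc : b < c) (k : ℕ) :
    ∀ᶠ m in atTop, k * ⌊b ^ m⌋₊ ≤ ⌊c ^ m⌋₊ := by
  filter_upwards [(tendsto_pow_atTop_atTop_of_one_lt ((one_lt_div hb).2 hbc)).eventually_ge_atTop
    (k : ℝ)] with m hm
  apply Nat.le_floor
  calc (↑(k * ⌊b ^ m⌋₊) : ℝ) ≤ (c / b) ^ m * b ^ m := by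
        push_cast
        exact mul_le_mul hm (Nat.floor_le (by positivity)) (by positivity)
          (pow_nonneg (div_pos (hb.trans hbc) hb).le m)
    _ = c ^ m := by rw [← mul_pow, div_mul_cancel₀ _ hb.ne']

theorem summable_floor_pow_mul_inv_two_pow {b : ℝ} (hb : 0 ≤ b) (hb2 : b < 2) :
    Summable fun m : ℕ ↦ (⌊b ^ m⌋₊ : ℝ) * ‖(2 : ℂ) ^ m‖⁻¹ := by
  refine (summable_geometric_of_lt_one (by positivity) ((div_lt_one two_pos).2 hb2)).of_nonneg_of_le
    (fun m ↦ by positivity) fun m ↦ ?_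
  rw [norm_pow, Complex.norm_two, div_pow, div_eq_mul_inv]
  gcongr
  exact Nat.floor_le (by positivity)

theorem entireRing.analyticAt (f : entireRing) (p : ℂ) : AnalyticAt ℂ (f : ℂ → ℂ) p :=
  (show Differentiable ℂ (f : ℂ → ℂ) from f.2).analyticAt p

noncomputable def orderValuation (p : ℂ) : AddValuation entireRing ℕ∞ :=
  AddValuation.of (fun f ↦ analyticOrderAt (f : ℂ → ℂ) p)
    (analyticOrderAt_eq_top.2 (.of_forall fun _ ↦ rfl))
    (analyticOrderAt_eq_zero.2 (.inr one_ne_zero))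
    (fun _ _ ↦ le_analyticOrderAt_add)
    (fun f g ↦ analyticOrderAt_mul (entireRing.analyticAt f p)
      (entireRing.analyticAt g p))

theorem orderValuation_apply (p : ℂ) (f : entireRing) :
    orderValuation p f = analyticOrderAt (f : ℂ → ℂ) p :=
  rfl

noncomputable def entireGrowthIdeal (b : ℝ) : Ideal entireRing :=
  AddValuation.growthIdeal (fun m : ℕ ↦ orderValuation (2 ^ m)) (hyperfilter ℕ)
    fun m ↦ ⌊b ^ m⌋₊

theorem entireGrowthIdeal_isPrime {b : ℝ} (hb : 1 ≤ b) : (entireGrowthIdeal b).IsPrime :=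
  AddValuation.growthIdeal_isPrime (.of_forall (floor_pow_ne_zero hb))

theorem exists_mem_entireGrowthIdeal_notMem {a b : ℝ} (ha : 0 < a) (hab : a < b) (hb : 1 ≤ b)
    (hb2 : b < 2) : ∃ f, f ∈ entireGrowthIdeal a ∧ f ∉ entireGrowthIdeal b := by
  obtain ⟨F, hF, hord⟩ := exists_differentiable_analyticOrderAt_eq (p := fun m : ℕ ↦ (2 : ℂ) ^ m)
    (fun m n (h : (2 : ℂ) ^ m = 2 ^ n) ↦ Nat.pow_right_injective le_rfl (by exact_mod_cast h))
    (fun m ↦ pow_ne_zero m two_ne_zero) (summable_floor_pow_mul_inv_two_pow (by linarith) hb2)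
  refine ⟨⟨F, hF⟩, fun k ↦ ?_, AddValuation.notMem_growthIdeal.2 ⟨2, .of_forall fun m ↦ ?_⟩⟩
  · filter_upwards [Nat.hyperfilter_le_atTop (eventually_mul_floor_pow_le ha hab k)] with m hm
    rw [orderValuation_apply, hord]
    exact_mod_cast hm
  · rw [orderValuation_apply, hord]
    have := floor_pow_ne_zero hb m
    norm_cast
    omega

theorem entireGrowthIdeal_strictAntiOn : StrictAntiOn entireGrowthIdeal (Set.Ioo 1 2) := by
  intro a ha b hb hab
  obtain ⟨f, hfa, hfb⟩ := exists_mem_entireGrowthIdeal_notMem (by linarith [ha.1]) hab hb.1.le hb.2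
  have hle : entireGrowthIdeal b ≤ entireGrowthIdeal a :=
    AddValuation.growthIdeal_anti (.of_forall (floor_pow_le_floor_pow (by linarith [ha.1]) hab.le))
  exact SetLike.lt_iff_le_and_exists.2 ⟨hle, f, hfa, hfb⟩

/-- The ring of entire functions contains a chain of distinct prime ideals of cardinality
continuum; in particular its Krull dimension is at least the cardinality of the continuum. -/
theorem entire_functions_continuum_chain_of_primes :
    ∃ C : Set (Ideal entireRing), (∀ P ∈ C, P.IsPrime) ∧ IsChain (· ≤ ·) C ∧
      Cardinal.mk C = Cardinal.continuum := by
  have hanti := entireGrowthIdeal_strictAntiOn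
  refine ⟨entireGrowthIdeal '' Set.Ioo 1 2, ?_, ?_, ?_⟩
  · rintro _ ⟨b, hb, rfl⟩
    exact entireGrowthIdeal_isPrime hb.1.le
  · rintro _ ⟨a, ha, rfl⟩ _ ⟨b, hb, rfl⟩ -
    rcases le_total a b with hab | hab
    · exact .inr (hanti.antitoneOn ha hb hab)
    · exact .inl (hanti.antitoneOn hb ha hab)
  · rw [Cardinal.mk_image_eq_of_injOn _ _ hanti.injOn, Cardinal.mk_Ioo_real one_lt_two]
end
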